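/- Fix h > 0, λ > 0, p > 0. Let φ : ℝ × ℤ → ℂ and a₂ : ℝ × ℤ → ℝ be differentiable in t at each n, and let a₀ : ℝ × ℤ → ℝ, a₁ : ℝ × ℤ → ℝ be arbitrary. Suppose that for all t ∈ ℝ and n ∈ ℤ: (i) i·(∂ₜφ(t,n) − i a₀(t,n) φ(t,n)) + D₁⁻D₁⁺φ(t,n) − a₂(t,n)² φ(t,n) + λ|φ(t,n)|^{2p} φ(t,n) = 0, with covariant derivatives taken with gauge a₁(t,·); and (ii) ∂ₜa₂(t,n) = −Im( conj(φ(t,n−1)) D₁⁺φ(t,n−1) ). If the constraint (a₂(0,n+1) − a₂(0,n))/h = (1/2)|φ(0,n)|² holds for all n ∈ ℤ, then (a₂(t,n+1) − a₂(t,n))/h = (1/2)|φ(t,n)|² holds for all t ∈ ℝ and all n ∈ ℤ. -/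

import Mathlib

/-!
The Gauss-law defect `(a₂(t,n+1) − a₂(t,n))/h − |φ(t,n)|²/2` has zero time derivative. With the
current `J(n) = Im(conj φ(n) · D₁⁺φ(n))`, equation (ii) reads `∂ₜa₂(n) = −J(n−1)`. Since all potential
terms in the Schrödinger equation (i) are real, it gives `∂ₜ|φ(n)|²/2 = −Im(conj φ(n) · D₁⁻D₁⁺φ(n))`,
and a discrete summation by parts turns the right-hand side into `−(J(n) − J(n−1))/h`.
-/

/-- Discrete forward covariant derivative `D₁⁺φ(n) = (e^{−i h a(n)} φ(n+1) − φ(n))/h`,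
where `a(n)` is the gauge component `A₁` at the half-site `n + 1/2`. -/
noncomputable def D1p (h : ℝ) (a : ℤ → ℝ) (φ : ℤ → ℂ) (n : ℤ) : ℂ :=
  (Complex.exp (-Complex.I * h * a n) * φ (n + 1) - φ n) / h

/-- Discrete backward covariant derivative `D₁⁻φ(n) = (φ(n) − e^{i h a(n−1)} φ(n−1))/h`. -/
noncomputable def D1m (h : ℝ) (a : ℤ → ℝ) (φ : ℤ → ℂ) (n : ℤ) : ℂ :=
  (φ n - Complex.exp (Complex.I * h * a (n - 1)) * φ (n - 1)) / h

open Complex ComplexConjugate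

theorem HasDerivAt.norm_sq_div_two_of_schrodinger {ψ : ℝ → ℂ} {ψ' D : ℂ} {t V : ℝ}
    (hψ : HasDerivAt ψ ψ' t) (heq : I * ψ' + D + V * ψ t = 0) :
    HasDerivAt (fun s => ‖ψ s‖ ^ 2 / 2) (-(conj (ψ t) * D).im) t := by
  have hψ' : ψ' = I * (D + V * ψ t) := by linear_combination (-I) * heq + ψ' * I_sq
  refine (hψ.norm_sq.div_const 2).congr_deriv ?_
  simp only [Complex.inner, hψ', mul_re, mul_im, add_re, add_im, I_re, I_im, ofReal_re,
    ofReal_im, conj_re, conj_im]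
  ring

theorem exp_mul_eq_add_mul_D1p {h : ℝ} (hh : h ≠ 0) (a : ℤ → ℝ) (φ : ℤ → ℂ) (n : ℤ) :
    exp (-I * h * a n) * φ (n + 1) = φ n + h * D1p h a φ n := by
  rw [D1p, mul_div_cancel₀ _ (ofReal_ne_zero.mpr hh)]
  ring

theorem im_conj_mul_D1m_D1p (h : ℝ) (a : ℤ → ℝ) (φ : ℤ → ℂ) (n : ℤ) :
    (conj (φ n) * D1m h a (D1p h a φ) n).im
      = ((conj (φ n) * D1p h a φ n).im - (conj (φ (n - 1)) * D1p h a φ (n - 1)).im) / h := by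
  rcases eq_or_ne h 0 with rfl | hh
  · -- both sides vanish, by the convention `x / 0 = 0`
    simp [D1m, D1p]
  set ψ := D1p h a φ
  have hconj : conj (φ n) * exp (I * h * a (n - 1)) = conj (φ (n - 1) + h * ψ (n - 1)) := by
    rw [← exp_mul_eq_add_mul_D1p hh, sub_add_cancel, map_mul, ← exp_conj]
    simp [mul_comm]
  have hsplit : conj (φ n) * D1m h a ψ n = (conj (φ n) * ψ n - conj (φ (n - 1)) * ψ (n - 1)
      - h * (conj (ψ (n - 1)) * ψ (n - 1))) / h := by
    rw [D1m, mul_div_assoc', mul_sub, ← mul_assoc, hconj]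
    simp only [map_add, map_mul, conj_ofReal]
    ring
  -- the last term `h |ψ(n-1)|²` is real
  rw [hsplit, div_ofReal_im, sub_im, sub_im, conj_mul']
  norm_cast
  simp

theorem discrete_CSS_constraint_preservation_general
    (h lam p : ℝ)
    (φ : ℝ → ℤ → ℂ) (a₀ a₁ a₂ : ℝ → ℤ → ℝ)
    (hφdiff : ∀ n : ℤ, Differentiable ℝ (fun t => φ t n))
    (ha₂diff : ∀ n : ℤ, Differentiable ℝ (fun t => a₂ t n))
    (heq1 : ∀ (t : ℝ) (n : ℤ),
      Complex.I * (deriv (fun s => φ s n) t - Complex.I * (a₀ t n : ℂ) * φ t n)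
        + D1m h (a₁ t) (D1p h (a₁ t) (φ t)) n
        - ((a₂ t n : ℂ)) ^ 2 * φ t n
        + (lam : ℂ) * ((‖φ t n‖ ^ (2 * p) : ℝ) : ℂ) * φ t n = 0)
    (heq2 : ∀ (t : ℝ) (n : ℤ),
      deriv (fun s => a₂ s n) t
        = -((starRingEnd ℂ) (φ t (n - 1)) * D1p h (a₁ t) (φ t) (n - 1)).im)
    (hinit : ∀ n : ℤ, (a₂ 0 (n + 1) - a₂ 0 n) / h = (1 / 2) * ‖φ 0 n‖ ^ 2) :
    ∀ (t : ℝ) (n : ℤ), (a₂ t (n + 1) - a₂ t n) / h = (1 / 2) * ‖φ t n‖ ^ 2 := by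
  intro t n
  set defect : ℝ → ℝ := fun s => (a₂ s (n + 1) - a₂ s n) / h - ‖φ s n‖ ^ 2 / 2
  have hdefect : ∀ s, HasDerivAt defect 0 s := by
    intro s
    have hmass := (hφdiff n s).hasDerivAt.norm_sq_div_two_of_schrodinger
      (D := D1m h (a₁ s) (D1p h (a₁ s) (φ s)) n)
      (V := a₀ s n - a₂ s n ^ 2 + lam * ‖φ s n‖ ^ (2 * p))
      (by push_cast; linear_combination heq1 s n + a₀ s n * φ s n * I_sq)
    refine ((((ha₂diff (n + 1) s).hasDerivAt.sub (ha₂diff n s).hasDerivAt).div_const h).sub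
      hmass).congr_deriv ?_
    rw [heq2, heq2, add_sub_cancel_right, im_conj_mul_D1m_D1p]
    ring
  have hconst := is_const_of_deriv_eq_zero (fun s => (hdefect s).differentiableAt)
    (fun s => (hdefect s).deriv) t 0
  simp only [defect] at hconst
  linarith [hinit n]

/-- **Preservation of the Gauss-law constraint** `∇₁⁺A₂ = ½|φ|²` under the time
evolution of the discrete Chern–Simons–Schrödinger system. -/
theorem discrete_CSS_constraint_preservation
    (h lam p : ℝ) (hh : 0 < h) (hlam : 0 < lam) (hp : 0 < p)
    (φ : ℝ → ℤ → ℂ) (a₀ a₁ a₂ : ℝ → ℤ → ℝ)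
    (hφdiff : ∀ n : ℤ, Differentiable ℝ (fun t => φ t n))
    (ha₂diff : ∀ n : ℤ, Differentiable ℝ (fun t => a₂ t n))
    (heq1 : ∀ (t : ℝ) (n : ℤ),
      Complex.I * (deriv (fun s => φ s n) t - Complex.I * (a₀ t n : ℂ) * φ t n)
        + D1m h (a₁ t) (D1p h (a₁ t) (φ t)) n
        - ((a₂ t n : ℂ)) ^ 2 * φ t n
        + (lam : ℂ) * ((‖φ t n‖ ^ (2 * p) : ℝ) : ℂ) * φ t n = 0)
    (heq2 : ∀ (t : ℝ) (n : ℤ),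
      deriv (fun s => a₂ s n) t
        = -((starRingEnd ℂ) (φ t (n - 1)) * D1p h (a₁ t) (φ t) (n - 1)).im)
    (hinit : ∀ n : ℤ, (a₂ 0 (n + 1) - a₂ 0 n) / h = (1 / 2) * ‖φ 0 n‖ ^ 2) :
    ∀ (t : ℝ) (n : ℤ), (a₂ t (n + 1) - a₂ t n) / h = (1 / 2) * ‖φ t n‖ ^ 2 :=
  discrete_CSS_constraint_preservation_general h lam p φ a₀ a₁ a₂ hφdiff ha₂diff heq1 heq2 hinit
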